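/- For d = 2, Π the Z basis and Ξ the X basis, the witness lower bound of the coherence, log₂ 2 − H(Δ_X(ρ)) = 1 − H(p₊), with p₊ = ⟨+|ρ|+⟩, is always less than or equal to the exact relative entropy of coherence C(ρ) = H(p_z) − H((1+|r|)/2) (Bloch vector r, p_z = ⟨0|ρ|0⟩), and the two are equal whenever the Bloch vector of ρ lies in the x–z plane with z-component 0, i.e. r = (x,0,0). -/

import Mathlib

open scoped BigOperators
open Real

/-- binary Shannon entropy (base 2) -/
noncomputable def H2 (p : ℝ) : ℝ := -(p * Real.logb 2 p) - (1 - p) * Real.logb 2 (1 - p)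

/-- von Neumann entropy (base 2) of a matrix, via its eigenvalues (0 if not Hermitian) -/
noncomputable def vnEntropy {n : Type*} [Fintype n] [DecidableEq n] (A : Matrix n n ℂ) : ℝ :=
  if h : A.IsHermitian then -∑ i, h.eigenvalues i * Real.logb 2 (h.eigenvalues i) else 0

/-- entropy of the dephased (in the standard/Z basis) state, i.e. Shannon entropy
of the diagonal of `A` -/
noncomputable def diagEntropy {n : Type*} [Fintype n] (A : Matrix n n ℂ) : ℝ :=
  -∑ i, (A i i).re * Real.logb 2 (A i i).re

/-- relative entropy of coherence with respect to the standard (Z) basis: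
`C(ρ) = H(Δ_Z(ρ)) - H(ρ)` -/
noncomputable def relEntCoh {n : Type*} [Fintype n] [DecidableEq n] (A : Matrix n n ℂ) : ℝ :=
  diagEntropy A - vnEntropy A

noncomputable def σx : Matrix (Fin 2) (Fin 2) ℂ := !![0, 1; 1, 0]
noncomputable def σy : Matrix (Fin 2) (Fin 2) ℂ := !![0, -Complex.I; Complex.I, 0]
noncomputable def σz : Matrix (Fin 2) (Fin 2) ℂ := !![1, 0; 0, -1]

/-!
The density matrix with Bloch vector `r` has trace `1` and determinant `(1 - |r|²) / 4`, so its
eigenvalues are `(1 ± |r|) / 2`; together with its diagonal `((1 + z) / 2, (1 - z) / 2)` this gives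
`C(ρ) = H(p_z) - H((1 + |r|) / 2)`.

For the bound, measure the entropy deficit `D u = log 2 - h ((1 + √u) / 2)` of a qubit in terms of
the squared Bloch length `u`. Its derivative is `artanh √u / (2 √u)`, which increases because
`artanh` is convex on `[0, 1)`; so `D` is convex on `[0, 1]`, and with `D 0 = 0` and `D ≥ 0` this
gives `D (x²) + D (z²) ≤ D |r|²`. In bits this reads
`(1 - H(p₊)) + (1 - H(p_z)) ≤ 1 - H((1 + |r|) / 2)`.
For `r = (x, 0, 0)` both sides equal `1 - H(p₊)` since `H(1/2) = 1`.
-/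

open Set Matrix

lemma H2_eq_binEntropy_div (p : ℝ) : H2 p = binEntropy p / log 2 := by
  simp only [H2, binEntropy, logb, log_inv]
  ring

lemma H2_half : H2 (1 / 2) = 1 := by
  rw [H2_eq_binEntropy_div, one_div, binEntropy_two_inv, div_self (log_pos one_lt_two).ne']

lemma H2_eq_of_sq_eq {a r : ℝ} (h : (2 * a - 1) ^ 2 = r ^ 2) : H2 a = H2 ((1 + r) / 2) := by
  rcases sq_eq_sq_iff_eq_or_eq_neg.1 h with h | h
  · rw [show a = (1 + r) / 2 by linarith]
  · rw [show a = 1 - (1 + r) / 2 by linarith, H2_eq_binEntropy_div, H2_eq_binEntropy_div,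
      binEntropy_one_sub]

lemma H2_one_add_sqrt_sq (x : ℝ) : H2 ((1 + √(x ^ 2)) / 2) = H2 ((1 + x) / 2) :=
  (H2_eq_of_sq_eq (by rw [sq_sqrt (sq_nonneg x)]; ring)).symm

lemma diagEntropy_fin_two {A : Matrix (Fin 2) (Fin 2) ℂ} (htr : A.trace = 1) :
    diagEntropy A = H2 (A 0 0).re := by
  have h11 : (A 1 1).re = 1 - (A 0 0).re := by
    have := congrArg Complex.re htr
    rw [trace_fin_two, Complex.add_re, Complex.one_re] at this
    linarith
  rw [diagEntropy, Fin.sum_univ_two, h11, H2]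
  ring

lemma vnEntropy_fin_two {A : Matrix (Fin 2) (Fin 2) ℂ} (hA : A.IsHermitian) (htr : A.trace = 1)
    {r : ℝ} (hdet : A.det = (1 - r ^ 2) / 4) : vnEntropy A = H2 ((1 + r) / 2) := by
  have hsum : hA.eigenvalues 0 + hA.eigenvalues 1 = 1 := by
    have := hA.trace_eq_sum_eigenvalues
    rw [htr, Fin.sum_univ_two] at this
    simpa using congrArg Complex.re this.symm
  have hprod : hA.eigenvalues 0 * hA.eigenvalues 1 = (1 - r ^ 2) / 4 := by
    have := hA.det_eq_prod_eigenvalues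
    rw [hdet, Fin.prod_univ_two] at this
    simpa [← Complex.ofReal_pow] using congrArg Complex.re this.symm
  set a := hA.eigenvalues 0
  rw [vnEntropy, dif_pos hA, Fin.sum_univ_two, ← H2_eq_of_sq_eq (a := a)]
  · rw [H2, show hA.eigenvalues 1 = 1 - a by linarith]
    ring
  · rw [show hA.eigenvalues 1 = 1 - a by linarith] at hprod
    linear_combination -4 * hprod

noncomputable def blochMatrix (x y z : ℝ) : Matrix (Fin 2) (Fin 2) ℂ :=
  (2:ℂ)⁻¹ • (1 + (x : ℂ) • σx + (y : ℂ) • σy + (z : ℂ) • σz)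

lemma blochMatrix_eq (x y z : ℝ) :
    blochMatrix x y z =
      !![((1 + z) / 2 : ℂ), (x - y * Complex.I) / 2; (x + y * Complex.I) / 2, (1 - z) / 2] := by
  ext i j
  fin_cases i <;> fin_cases j <;> simp [blochMatrix, σx, σy, σz, one_apply] <;> ring

lemma blochMatrix_isHermitian (x y z : ℝ) : (blochMatrix x y z).IsHermitian := by
  rw [blochMatrix_eq]
  ext i j
  fin_cases i <;> fin_cases j <;> simp [Complex.ext_iff]

lemma blochMatrix_trace (x y z : ℝ) : (blochMatrix x y z).trace = 1 := by
  rw [blochMatrix_eq, trace_fin_two_of]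
  ring

lemma blochMatrix_det (x y z : ℝ) :
    (blochMatrix x y z).det = (1 - √(x ^ 2 + y ^ 2 + z ^ 2) ^ 2) / 4 := by
  rw [← Complex.ofReal_pow, sq_sqrt (by positivity), blochMatrix_eq, det_fin_two_of]
  push_cast
  linear_combination (y ^ 2 / 4 : ℂ) * Complex.I_sq

lemma relEntCoh_blochMatrix (x y z : ℝ) :
    relEntCoh (blochMatrix x y z) = H2 ((1 + z) / 2) - H2 ((1 + √(x ^ 2 + y ^ 2 + z ^ 2)) / 2) := by
  rw [relEntCoh, diagEntropy_fin_two (blochMatrix_trace x y z),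
    vnEntropy_fin_two (blochMatrix_isHermitian x y z) (blochMatrix_trace x y z)
      (blochMatrix_det x y z), blochMatrix_eq]
  simp

lemma ConvexOn.mul_le_mul_of_map_zero {f : ℝ → ℝ} {s : Set ℝ} (hf : ConvexOn ℝ s f) (h0 : 0 ∈ s)
    (hf0 : f 0 = 0) {u v : ℝ} (hu : 0 ≤ u) (huv : u ≤ v) (hv : v ∈ s) : v * f u ≤ u * f v := by
  rcases hu.trans huv |>.eq_or_lt with rfl | hv0
  · rw [le_antisymm huv hu, hf0]
  have key := hf.2 hv h0 (div_nonneg hu hv0.le) (sub_nonneg.2 ((div_le_one hv0).2 huv))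
    (add_sub_cancel _ _)
  simp only [smul_eq_mul, mul_zero, add_zero, div_mul_cancel₀ _ hv0.ne', hf0] at key
  calc v * f u ≤ v * (u / v * f v) := mul_le_mul_of_nonneg_left key hv0.le
    _ = u * f v := by field_simp

lemma ConvexOn.add_le_of_map_zero {f : ℝ → ℝ} {b : ℝ} (hf : ConvexOn ℝ (Icc 0 b) f)
    (hf0 : f 0 = 0) {u v w : ℝ} (hu : 0 ≤ u) (hv : 0 ≤ v) (huvw : u + v ≤ w) (hwb : w ≤ b)
    (hfw : 0 ≤ f w) : f u + f v ≤ f w := by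
  have hw : w ∈ Icc 0 b := ⟨by linarith, hwb⟩
  have h0 : (0 : ℝ) ∈ Icc 0 b := ⟨le_rfl, hw.1.trans hwb⟩
  rcases hw.1.eq_or_lt with hw0 | hw0
  · rw [show u = 0 by linarith, show v = 0 by linarith, hf0, ← hw0, hf0, add_zero]
  have hfu := hf.mul_le_mul_of_map_zero h0 hf0 hu (by linarith) hw
  have hfv := hf.mul_le_mul_of_map_zero h0 hf0 hv (by linarith) hw
  refine le_of_mul_le_mul_left ?_ hw0
  nlinarith

lemma hasDerivAt_log_one_add_sub_log_one_sub {t : ℝ} (ht : t ∈ Ioo (-1) 1) :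
    HasDerivAt (fun t ↦ log (1 + t) - log (1 - t)) (2 / (1 - t ^ 2)) t := by
  have h1 : 1 + t ≠ 0 := by linarith [ht.1]
  have h2 : 1 - t ≠ 0 := by linarith [ht.2]
  have h3 : 1 - t ^ 2 ≠ 0 := by rw [← one_pow 2, sq_sub_sq]; exact mul_ne_zero h1 h2
  refine ((((hasDerivAt_id t).const_add 1).log h1).sub
    (((hasDerivAt_id t).const_sub 1).log h2)).congr_deriv ?_
  simp only [id]
  field_simp
  ring

lemma convexOn_log_one_add_sub_log_one_sub :
    ConvexOn ℝ (Ico 0 1) (fun t ↦ log (1 + t) - log (1 - t)) := by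
  refine MonotoneOn.convexOn_of_deriv (convex_Ico 0 1) ?_ ?_ ?_
  · exact (ContinuousOn.log (by fun_prop) fun t ht ↦ (by linarith [ht.1] : (0 : ℝ) < 1 + t).ne').sub
      (ContinuousOn.log (by fun_prop) fun t ht ↦ (by linarith [ht.2] : (0 : ℝ) < 1 - t).ne')
  · rw [interior_Ico]
    intro t ht
    exact (hasDerivAt_log_one_add_sub_log_one_sub ⟨by linarith [ht.1], ht.2⟩).differentiableAt
      |>.differentiableWithinAt
  · rw [interior_Ico]
    intro s hs t ht hst
    rw [(hasDerivAt_log_one_add_sub_log_one_sub ⟨by linarith [hs.1], hs.2⟩).deriv,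
      (hasDerivAt_log_one_add_sub_log_one_sub ⟨by linarith [ht.1], ht.2⟩).deriv]
    gcongr
    · nlinarith [ht.1, ht.2]
    · nlinarith [hs.1]

noncomputable def entropyDeficit (u : ℝ) : ℝ := log 2 - binEntropy ((1 + √u) / 2)

lemma entropyDeficit_eq (u : ℝ) : entropyDeficit u = log 2 * (1 - H2 ((1 + √u) / 2)) := by
  rw [entropyDeficit, H2_eq_binEntropy_div]
  field_simp

lemma entropyDeficit_zero : entropyDeficit 0 = 0 := by
  simp [entropyDeficit]

lemma entropyDeficit_nonneg (u : ℝ) : 0 ≤ entropyDeficit u :=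
  sub_nonneg.2 binEntropy_le_log_two

lemma hasDerivAt_entropyDeficit {u : ℝ} (hu : u ∈ Ioo 0 1) :
    HasDerivAt entropyDeficit ((log (1 + √u) - log (1 - √u)) / (4 * √u)) u := by
  have ht0 : 0 < √u := sqrt_pos.2 hu.1
  have ht1 : √u < 1 := (sqrt_lt' one_pos).2 (by simpa using hu.2)
  have hp : HasDerivAt (fun u ↦ (1 + √u) / 2) (1 / (2 * √u) / 2) u :=
    ((hasDerivAt_sqrt hu.1.ne').const_add 1).div_const 2
  refine (((hasDerivAt_binEntropy (by positivity) (by linarith)).comp u hp).const_sub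
    (log 2)).congr_deriv ?_
  rw [show 1 - (1 + √u) / 2 = (1 - √u) / 2 by ring, log_div (by linarith) two_ne_zero,
    log_div (by linarith) two_ne_zero]
  field_simp
  ring

lemma convexOn_entropyDeficit : ConvexOn ℝ (Icc 0 1) entropyDeficit := by
  refine MonotoneOn.convexOn_of_deriv (convex_Icc 0 1) ?_ ?_ ?_
  · exact (continuous_const.sub (binEntropy_continuous.comp (by fun_prop))).continuousOn
  · rw [interior_Icc]
    exact fun u hu ↦ (hasDerivAt_entropyDeficit hu).differentiableAt.differentiableWithinAt
  · rw [interior_Icc]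
    intro u hu v hv huv
    rw [(hasDerivAt_entropyDeficit hu).deriv, (hasDerivAt_entropyDeficit hv).deriv,
      div_le_div_iff₀ (by positivity [sqrt_pos.2 hu.1]) (by positivity [sqrt_pos.2 hv.1])]
    have hv1 : √v < 1 := (sqrt_lt' one_pos).2 (by simpa using hv.2)
    have := convexOn_log_one_add_sub_log_one_sub.mul_le_mul_of_map_zero ⟨le_rfl, one_pos⟩
      (by simp) (sqrt_nonneg u) (sqrt_le_sqrt huv) ⟨sqrt_nonneg v, hv1⟩
    linarith

lemma one_sub_H2_le_H2_sub_H2 {x y z : ℝ} (h : x ^ 2 + y ^ 2 + z ^ 2 ≤ 1) :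
    1 - H2 ((1 + x) / 2) ≤ H2 ((1 + z) / 2) - H2 ((1 + √(x ^ 2 + y ^ 2 + z ^ 2)) / 2) := by
  have key := convexOn_entropyDeficit.add_le_of_map_zero entropyDeficit_zero (sq_nonneg x)
    (sq_nonneg z) (by nlinarith [sq_nonneg y]) h (entropyDeficit_nonneg _)
  rw [entropyDeficit_eq, entropyDeficit_eq, entropyDeficit_eq, H2_one_add_sqrt_sq,
    H2_one_add_sqrt_sq, ← mul_add] at key
  linarith [le_of_mul_le_mul_left key (log_pos one_lt_two)]

/-- for a qubit with Bloch vector `(x,y,z)` (so `p_z = (1+z)/2`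
and `p₊ = ⟨+|ρ|+⟩ = (1+x)/2`), the X-basis witness lower bound
`log₂2 - H(Δ_X(ρ)) = 1 - H(p₊)` never exceeds the exact relative entropy of
coherence `C(ρ) = H(p_z) - H((1+|r|)/2)`, and the two are equal whenever the
Bloch vector lies on the x axis (`y = z = 0`). -/
theorem stmt17 (x y z : ℝ) (h : x^2 + y^2 + z^2 ≤ 1) :
    relEntCoh ((2:ℂ)⁻¹ • (1 + (x : ℂ) • σx + (y : ℂ) • σy + (z : ℂ) • σz))
        = H2 ((1 + z) / 2) - H2 ((1 + Real.sqrt (x^2 + y^2 + z^2)) / 2) ∧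
    1 - H2 ((1 + x) / 2)
        ≤ relEntCoh ((2:ℂ)⁻¹ • (1 + (x : ℂ) • σx + (y : ℂ) • σy + (z : ℂ) • σz)) ∧
    (y = 0 → z = 0 →
      1 - H2 ((1 + x) / 2)
        = relEntCoh ((2:ℂ)⁻¹ • (1 + (x : ℂ) • σx + (y : ℂ) • σy + (z : ℂ) • σz))) := by
  refine ⟨relEntCoh_blochMatrix x y z,
    (one_sub_H2_le_H2_sub_H2 h).trans_eq (relEntCoh_blochMatrix x y z).symm, ?_⟩
  rintro rfl rfl
  refine Eq.trans ?_ (relEntCoh_blochMatrix x 0 0).symm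
  norm_num [H2_one_add_sqrt_sq, ← one_div, H2_half]
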